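/- Let (X, ρ, μ) be a metric triple with μ nonatomic and full support. Then two metric triples (X₁, ρ₁, μ₁), (X₂, ρ₂, μ₂) are isomorphic (there is a measure-preserving isometry between full-measure subsets) if and only if their matrix distributions coincide: the pushforwards of μ₁^ℕ and μ₂^ℕ under x ↦ (ρᵢ(xₙ, xₘ))ₙ,ₘ are equal as measures on the space of infinite symmetric distance matrices. (Gromov–Vershik recovery theorem.) -/

import Mathlib

/-!
Both directions pass through the sequence space `(ℕ → X, μ^ℕ)`. An isomorphism `φ` acts
coordinatewise on sequences and carries `μ₁^ℕ` to `μ₂^ℕ` while preserving distance matrices.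
Conversely, a `μ^ℕ`-typical sequence is equidistributed for `μ` (strong law of large numbers on a
countable family of open sets, then the portmanteau theorem), hence dense by full support.
Disintegrating both sequence measures over the common matrix distribution yields typical sequences
`x` in `X₁` and `y` in `X₂` with the same distance matrix. Then `x n ↦ y n` extends to a surjective
isometry `φ`, and `μ₁.map φ = μ₂` because both are the weak limit of the empirical measures of `y`.
-/

open MeasureTheory ProbabilityTheory Filter Topology Set TopologicalSpace
open scoped ENNReal

def IsProductMeasure {α : Type*} [MeasurableSpace α] (μ : Measure α) (ν : Measure (ℕ → α)) : Prop :=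
  ∀ (s : Finset ℕ) (A : ℕ → Set α), (∀ n, MeasurableSet (A n)) →
    ν {x | ∀ n ∈ s, x n ∈ A n} = ∏ n ∈ s, μ (A n)

theorem IsProductMeasure.eq_infinitePi {X : Type*} [MeasurableSpace X] {μ : Measure X}
    [IsProbabilityMeasure μ] {ν : Measure (ℕ → X)} (hν : IsProductMeasure μ ν) :
    ν = Measure.infinitePi fun _ => μ :=
  Measure.eq_infinitePi _ fun s t ht => hν s t ht

theorem measure_sUnion_eq_iSup_finite {X : Type*} [MeasurableSpace X] (μ : Measure X)
    {T : Set (Set X)} (hT : T.Countable) :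
    μ (⋃₀ T) = ⨆ t ∈ {t : Set (Set X) | t.Finite ∧ t ⊆ T}, μ (⋃₀ t) := by
  have hT_eq : ⋃₀ T = ⋃ t ∈ {t : Set (Set X) | t.Finite ∧ t ⊆ T}, ⋃₀ t := by
    refine subset_antisymm (fun a ⟨b, hb, ha⟩ => ?_) (iUnion₂_subset fun t ht => sUnion_mono ht.2)
    exact mem_biUnion ⟨finite_singleton b, singleton_subset_iff.2 hb⟩ (by simpa using ha)
  rw [hT_eq, measure_biUnion_eq_iSup (countable_ofPred_finite_subset hT)]
  exact fun s hs t ht => ⟨s ∪ t, ⟨hs.1.union ht.1, union_subset hs.2 ht.2⟩,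
    sUnion_mono subset_union_left, sUnion_mono subset_union_right⟩

section Coupling

variable {Ω Ω' Z : Type*} [MeasurableSpace Ω] [StandardBorelSpace Ω] [Nonempty Ω]
  [MeasurableSpace Ω'] [StandardBorelSpace Ω'] [Nonempty Ω'] [MeasurableSpace Z] [MeasurableEq Z]
  {ν : Measure Ω} [IsProbabilityMeasure ν] {ν' : Measure Ω'} [IsProbabilityMeasure ν']
  {f : Ω → Z} {f' : Ω' → Z}

theorem ae_ae_condDistrib_id (hf : Measurable f) {p : Ω → Prop} (hp : ∀ᵐ ω ∂ν, p ω) :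
    ∀ᵐ z ∂(ν.map f), ∀ᵐ ω ∂(condDistrib id f ν z), p ω ∧ f ω = z := by
  obtain ⟨s, hs_ae, hs, hsp⟩ := hp.exists_measurable_mem
  have hgraph : ∀ᵐ q ∂(ν.map fun ω => (f ω, id ω)), q.2 ∈ s ∧ f q.2 = q.1 := by
    refine (ae_map_iff (hf.prodMk measurable_id).aemeasurable ((measurable_snd hs).inter
      (measurableSet_eq_fun (hf.comp measurable_snd) measurable_fst))).2 ?_
    filter_upwards [hs_ae] with ω hω using ⟨hω, rfl⟩
  rw [← compProd_map_condDistrib aemeasurable_id] at hgraph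
  filter_upwards [Measure.ae_ae_of_ae_compProd hgraph] with z hz
  filter_upwards [hz] with ω hω using ⟨hsp ω hω.1, hω.2⟩

theorem exists_eq_of_map_eq_map (hf : Measurable f) (hf' : Measurable f') (h : ν.map f = ν'.map f')
    {p : Ω → Prop} {p' : Ω' → Prop} (hp : ∀ᵐ ω ∂ν, p ω) (hp' : ∀ᵐ ω ∂ν', p' ω) :
    ∃ ω ω', p ω ∧ p' ω' ∧ f ω = f' ω' := by
  have : IsProbabilityMeasure (ν.map f) := Measure.isProbabilityMeasure_map hf.aemeasurable
  have h' := ae_ae_condDistrib_id hf' hp'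
  rw [← h] at h'
  obtain ⟨z, hz, hz'⟩ := (ae_ae_condDistrib_id hf hp |>.and h').exists
  obtain ⟨ω, hω, rfl⟩ := hz.exists
  obtain ⟨ω', hω', hω'z⟩ := hz'.exists
  exact ⟨ω, ω', hω, hω', hω'z.symm⟩

end Coupling

section Empirical

variable {X : Type*} [MeasurableSpace X]

-- Averages over the `N + 1` points `x 0, …, x N`, so that the average is never empty.
noncomputable def empiricalMeasure (x : ℕ → X) (N : ℕ) : ProbabilityMeasure X :=
  ⟨(N + 1 : ℝ≥0∞)⁻¹ • ∑ k ∈ Finset.range (N + 1), Measure.dirac (x k), by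
    constructor
    simp [ENNReal.inv_mul_cancel]⟩

theorem empiricalMeasure_real_apply (x : ℕ → X) (N : ℕ) {S : Set X} (hS : MeasurableSet S) :
    (empiricalMeasure x N : Measure X).real S =
      (∑ k ∈ Finset.range (N + 1), S.indicator 1 (x k)) / (N + 1) := by
  have hind : ∀ a, (S.indicator 1 a : ℝ≥0∞) = ENNReal.ofReal (S.indicator 1 a) := fun a => by
    by_cases ha : a ∈ S <;> simp [ha]
  have hnn : ∀ a, 0 ≤ S.indicator (1 : X → ℝ) a := Set.indicator_nonneg fun _ _ => zero_le_one
  simp only [empiricalMeasure, ProbabilityMeasure.coe_mk, Measure.real, Measure.smul_apply,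
    Measure.coe_finsetSum, Finset.sum_apply, Measure.dirac_apply' _ hS, hind, smul_eq_mul]
  rw [← ENNReal.ofReal_sum_of_nonneg fun k _ => hnn _, ENNReal.toReal_mul,
    ENNReal.toReal_ofReal (Finset.sum_nonneg fun k _ => hnn _), div_eq_inv_mul]
  norm_cast
  rw [ENNReal.toReal_inv, ENNReal.toReal_natCast]

theorem empiricalMeasure_apply_eq_zero {x : ℕ → X} {S : Set X} (hS : MeasurableSet S)
    (hx : ∀ k, x k ∉ S) (N : ℕ) : (empiricalMeasure x N : Measure X) S = 0 := by
  simp [empiricalMeasure, Measure.dirac_apply' _ hS, hx]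

theorem empiricalMeasure_comp {Y : Type*} [MeasurableSpace Y] (x : ℕ → X) {φ : X → Y}
    (hφ : Measurable φ) (N : ℕ) :
    empiricalMeasure (φ ∘ x) N = (empiricalMeasure x N).map hφ.aemeasurable := by
  apply Subtype.ext
  simp [empiricalMeasure, ProbabilityMeasure.map, Measure.map_smul,
    Measure.map_finset_sum hφ.aemeasurable, Measure.map_dirac' hφ]

theorem ae_tendsto_empiricalMeasure_apply (μ : Measure X) [IsProbabilityMeasure μ] {S : Set X}
    (hS : MeasurableSet S) :
    ∀ᵐ x ∂(Measure.infinitePi fun _ => μ),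
      Tendsto (fun N => (empiricalMeasure x N : Measure X) S) atTop (𝓝 (μ S)) := by
  set Y : ℕ → (ℕ → X) → ℝ := fun k x => S.indicator 1 (x k)
  have hind : Measurable (S.indicator (1 : X → ℝ)) := measurable_one.indicator hS
  have hlaw : ∀ k, (Measure.infinitePi fun _ => μ).map (Y k) = μ.map (S.indicator 1) := fun k => by
    rw [show Y k = S.indicator 1 ∘ (fun x : ℕ → X => x k) from rfl,
      ← Measure.map_map hind (measurable_pi_apply k), Measure.infinitePi_map_eval]
  have hint : Integrable (Y 0) (Measure.infinitePi fun _ => μ) := by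
    refine (integrable_map_measure hind.aestronglyMeasurable
      (measurable_pi_apply 0).aemeasurable).1 ?_
    rw [Measure.infinitePi_map_eval]
    exact (integrable_const 1).indicator hS
  have hmean : ∫ x, Y 0 x ∂(Measure.infinitePi fun _ => μ) = μ.real S := by
    rw [← integral_map (measurable_pi_apply 0).aemeasurable hind.aestronglyMeasurable,
      Measure.infinitePi_map_eval, integral_indicator_one hS]
  have hslln := strong_law_ae_real Y hint
    (fun i j hij => ((iIndepFun_infinitePi (P := fun _ => μ) (X := fun _ => id)
      fun _ => measurable_id).indepFun hij).comp hind hind)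
    (fun i => ⟨(hind.comp (measurable_pi_apply i)).aemeasurable,
      (hind.comp (measurable_pi_apply 0)).aemeasurable, by rw [hlaw, hlaw]⟩)
  filter_upwards [hslln] with x hx
  rw [hmean] at hx
  refine (ENNReal.tendsto_toReal_iff (fun _ => measure_ne_top _ _) (measure_ne_top _ _)).1 ?_
  simp only [← Measure.real_def, empiricalMeasure_real_apply x _ hS]
  simpa [Y] using (tendsto_add_atTop_iff_nat 1).2 hx

variable [TopologicalSpace X]

theorem ae_tendsto_empiricalMeasure [SecondCountableTopology X] [HasOuterApproxClosed X]
    [BorelSpace X] (μ : ProbabilityMeasure X) :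
    ∀ᵐ x ∂(Measure.infinitePi fun _ => (μ : Measure X)),
      Tendsto (empiricalMeasure x) atTop (𝓝 μ) := by
  -- Finite unions of basic open sets form a countable family approximating every open set.
  have hopen : ∀ t ∈ {t : Set (Set X) | t.Finite ∧ t ⊆ countableBasis X}, IsOpen (⋃₀ t) :=
    fun t ht => isOpen_sUnion fun b hb => isOpen_of_mem_countableBasis (ht.2 hb)
  have hfreq := (ae_ball_iff (countable_ofPred_finite_subset (countable_countableBasis X))).2
    fun t ht => ae_tendsto_empiricalMeasure_apply (μ : Measure X) (hopen t ht).measurableSet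
  filter_upwards [hfreq] with x hx
  refine tendsto_of_forall_isOpen_le_liminf' fun U hU => ?_
  conv_lhs => rw [(isBasis_countableBasis X).open_eq_sUnion' hU, measure_sUnion_eq_iSup_finite _
    ((countable_countableBasis X).mono fun b hb => hb.1)]
  refine iSup₂_le fun t ht => ?_
  rw [← (hx t ⟨ht.1, fun b hb => (ht.2 hb).1⟩).liminf_eq]
  exact liminf_le_liminf (Eventually.of_forall fun N => measure_mono
    (sUnion_subset fun b hb => (ht.2 hb).2))

theorem denseRange_of_tendsto_empiricalMeasure [OpensMeasurableSpace X] [HasOuterApproxClosed X]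
    {μ : ProbabilityMeasure X} [(μ : Measure X).IsOpenPosMeasure] {x : ℕ → X}
    (hx : Tendsto (empiricalMeasure x) atTop (𝓝 μ)) : DenseRange x := by
  refine dense_iff_inter_open.2 fun U hU hne => ?_
  by_contra! hdisj
  have hnot : ∀ k, x k ∉ U := fun k hk => hdisj.subset ⟨hk, mem_range_self k⟩
  have := ProbabilityMeasure.le_liminf_measure_open_of_tendsto hx hU
  simp only [empiricalMeasure_apply_eq_zero hU.measurableSet hnot, liminf_const] at this
  exact (hU.measure_pos _ hne).ne' (nonpos_iff_eq_zero.1 this)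

theorem tendsto_empiricalMeasure_comp [OpensMeasurableSpace X] {Y : Type*} [MeasurableSpace Y]
    [TopologicalSpace Y] [BorelSpace Y] {φ : X → Y} (hφ : Continuous φ) {x : ℕ → X}
    {μ : ProbabilityMeasure X} (hx : Tendsto (empiricalMeasure x) atTop (𝓝 μ)) :
    Tendsto (empiricalMeasure (φ ∘ x)) atTop (𝓝 (μ.map hφ.measurable.aemeasurable)) := by
  rw [funext (empiricalMeasure_comp x hφ.measurable)]
  exact (ProbabilityMeasure.continuous_map hφ).continuousAt.tendsto.comp hx

end Empirical

theorem exists_isometry_comp_eq {ι X Y : Type*} [PseudoMetricSpace X] [MetricSpace Y]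
    [CompleteSpace Y] {x : ι → X} {y : ι → Y} (hx : DenseRange x)
    (hd : ∀ n m, dist (y n) (y m) = dist (x n) (x m)) :
    ∃ φ : X → Y, Isometry φ ∧ φ ∘ x = y := by
  choose idx hidx using fun s : range x => s.2
  set f : range x → Y := fun s => y (idx s)
  have hf : Isometry f := Isometry.of_dist_eq fun s t => by
    rw [hd, hidx, hidx, Subtype.dist_eq]
  have hfx : ∀ n, f ⟨x n, mem_range_self n⟩ = y n := fun n =>
    dist_eq_zero.1 <| by rw [hd, hidx, dist_self]
  have hψ := hx.uniformContinuous_extend hf.uniformContinuous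
  refine ⟨hx.extend f, Isometry.of_dist_eq fun a b => ?_, funext fun n => ?_⟩
  · refine isClosed_property2 (p := fun a b => dist (hx.extend f a) (hx.extend f b) = dist a b)
      hx.denseRange_val (isClosed_eq ((hψ.continuous.comp continuous_fst).dist
        (hψ.continuous.comp continuous_snd)) continuous_dist) (fun s t => ?_) a b
    simp only [hx.extend_of_ind hf.uniformContinuous, hf.dist_eq, Subtype.dist_eq]
  · simpa [hfx] using hx.extend_of_ind hf.uniformContinuous ⟨x n, mem_range_self n⟩

theorem Isometry.surjective_of_denseRange_comp {ι X Y : Type*} [MetricSpace X] [CompleteSpace X]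
    [MetricSpace Y] {φ : X → Y} (hφ : Isometry φ) {x : ι → X} (h : DenseRange (φ ∘ x)) :
    Function.Surjective φ := by
  rw [← range_eq_univ, ← hφ.isClosedEmbedding.isClosed_range.closure_eq]
  exact h.of_comp.closure_range

def distMatrix {X : Type*} [PseudoMetricSpace X] (x : ℕ → X) : ℕ × ℕ → ℝ :=
  fun nm => dist (x nm.1) (x nm.2)

theorem measurable_distMatrix {X : Type*} [PseudoMetricSpace X] [SecondCountableTopology X]
    [MeasurableSpace X] [BorelSpace X] : Measurable (distMatrix : (ℕ → X) → ℕ × ℕ → ℝ) :=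
  measurable_pi_lambda _ fun _ => (measurable_pi_apply _).dist (measurable_pi_apply _)

theorem map_distMatrix_infinitePi_map {X Y : Type*} [PseudoMetricSpace X] [MeasurableSpace X]
    [PseudoMetricSpace Y] [SecondCountableTopology Y] [MeasurableSpace Y] [BorelSpace Y]
    (μ : Measure X) [IsProbabilityMeasure μ] {A : Set X} (hA : μ Aᶜ = 0) {φ : X → Y}
    (hφ : Measurable φ) (hφA : ∀ a ∈ A, ∀ b ∈ A, dist (φ a) (φ b) = dist a b) :
    (Measure.infinitePi fun _ => μ.map φ).map distMatrix =
      (Measure.infinitePi fun _ => μ).map distMatrix := by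
  rw [← Measure.infinitePi_map_pi (fun _ => μ) (fun _ => hφ),
    Measure.map_map measurable_distMatrix (by fun_prop)]
  refine Measure.map_congr ?_
  have hmem : ∀ᵐ x ∂(Measure.infinitePi fun _ => μ), ∀ n : ℕ, x n ∈ A := ae_all_iff.2 fun n =>
    (measurePreserving_eval_infinitePi _ n).quasiMeasurePreserving.ae (ae_iff.2 hA)
  filter_upwards [hmem] with x hx
  exact funext fun nm => hφA _ (hx _) _ (hx _)

theorem stmt_10_general (X₁ X₂ : Type*)
    [MetricSpace X₁] [TopologicalSpace.SeparableSpace X₁] [CompleteSpace X₁]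
    [MeasurableSpace X₁] [BorelSpace X₁]
    [MetricSpace X₂] [TopologicalSpace.SeparableSpace X₂] [CompleteSpace X₂]
    [MeasurableSpace X₂] [BorelSpace X₂]
    (μ₁ : Measure X₁) [IsProbabilityMeasure μ₁]
    (hsupp₁ : ∀ U : Set X₁, IsOpen U → U.Nonempty → 0 < μ₁ U)
    (μ₂ : Measure X₂) [IsProbabilityMeasure μ₂]
    (hsupp₂ : ∀ U : Set X₂, IsOpen U → U.Nonempty → 0 < μ₂ U)
    (ν₁ : Measure (ℕ → X₁)) (hν₁ : IsProductMeasure μ₁ ν₁)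
    (ν₂ : Measure (ℕ → X₂)) (hν₂ : IsProductMeasure μ₂ ν₂) :
    (∃ (A₁ : Set X₁) (A₂ : Set X₂) (φ : X₁ → X₂),
        MeasurableSet A₁ ∧ MeasurableSet A₂ ∧ μ₁ A₁ᶜ = 0 ∧ μ₂ A₂ᶜ = 0 ∧
        Measurable φ ∧ Set.BijOn φ A₁ A₂ ∧ μ₁.map φ = μ₂ ∧
        ∀ x ∈ A₁, ∀ y ∈ A₁, dist (φ x) (φ y) = dist x y) ↔
      ν₁.map (fun x (nm : ℕ × ℕ) => dist (x nm.1) (x nm.2)) =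
        ν₂.map (fun x (nm : ℕ × ℕ) => dist (x nm.1) (x nm.2)) := by
  obtain rfl := hν₁.eq_infinitePi
  obtain rfl := hν₂.eq_infinitePi
  change _ ↔ Measure.map distMatrix _ = Measure.map distMatrix _
  constructor
  · rintro ⟨A₁, -, φ, -, -, hA₁, -, hφ, -, rfl, hφA⟩
    exact (map_distMatrix_infinitePi_map μ₁ hA₁ hφ hφA).symm
  · intro h
    let P₁ : ProbabilityMeasure X₁ := ⟨μ₁, inferInstance⟩
    let P₂ : ProbabilityMeasure X₂ := ⟨μ₂, inferInstance⟩
    have : (P₁ : Measure X₁).IsOpenPosMeasure := ⟨fun U hU hne => (hsupp₁ U hU hne).ne'⟩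
    have : (P₂ : Measure X₂).IsOpenPosMeasure := ⟨fun U hU hne => (hsupp₂ U hU hne).ne'⟩
    have := nonempty_of_isProbabilityMeasure μ₁
    have := nonempty_of_isProbabilityMeasure μ₂
    obtain ⟨x, y, hx, hy, hxy⟩ := exists_eq_of_map_eq_map measurable_distMatrix
      measurable_distMatrix h (ae_tendsto_empiricalMeasure P₁) (ae_tendsto_empiricalMeasure P₂)
    obtain ⟨φ, hφ, rfl⟩ := exists_isometry_comp_eq (denseRange_of_tendsto_empiricalMeasure hx)
      fun n m => (congrFun hxy (n, m)).symm
    have hφsurj := hφ.surjective_of_denseRange_comp (denseRange_of_tendsto_empiricalMeasure hy)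
    have hmap := tendsto_nhds_unique (tendsto_empiricalMeasure_comp hφ.continuous hx) hy
    exact ⟨univ, univ, φ, .univ, .univ, by simp, by simp, hφ.continuous.measurable,
      bijOn_univ.2 ⟨hφ.injective, hφsurj⟩, congrArg ProbabilityMeasure.toMeasure hmap,
      fun a _ b _ => hφ.dist_eq a b⟩

/-- Gromov–Vershik recovery theorem: two metric triples are isomorphic (by a measure-preserving
isometry between full-measure subsets) if and only if their matrix distributions coincide. -/
theorem stmt_10 (X₁ X₂ : Type*)
    [MetricSpace X₁] [TopologicalSpace.SeparableSpace X₁] [CompleteSpace X₁]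
    [MeasurableSpace X₁] [BorelSpace X₁]
    [MetricSpace X₂] [TopologicalSpace.SeparableSpace X₂] [CompleteSpace X₂]
    [MeasurableSpace X₂] [BorelSpace X₂]
    (μ₁ : Measure X₁) [IsProbabilityMeasure μ₁] [NullSingletonClass μ₁]
    (hsupp₁ : ∀ U : Set X₁, IsOpen U → U.Nonempty → 0 < μ₁ U)
    (μ₂ : Measure X₂) [IsProbabilityMeasure μ₂] [NullSingletonClass μ₂]
    (hsupp₂ : ∀ U : Set X₂, IsOpen U → U.Nonempty → 0 < μ₂ U)
    (ν₁ : Measure (ℕ → X₁)) (hν₁ : IsProductMeasure μ₁ ν₁)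
    (ν₂ : Measure (ℕ → X₂)) (hν₂ : IsProductMeasure μ₂ ν₂) :
    (∃ (A₁ : Set X₁) (A₂ : Set X₂) (φ : X₁ → X₂),
        MeasurableSet A₁ ∧ MeasurableSet A₂ ∧ μ₁ A₁ᶜ = 0 ∧ μ₂ A₂ᶜ = 0 ∧
        Measurable φ ∧ Set.BijOn φ A₁ A₂ ∧ μ₁.map φ = μ₂ ∧
        ∀ x ∈ A₁, ∀ y ∈ A₁, dist (φ x) (φ y) = dist x y) ↔
      ν₁.map (fun x (nm : ℕ × ℕ) => dist (x nm.1) (x nm.2)) =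
        ν₂.map (fun x (nm : ℕ × ℕ) => dist (x nm.1) (x nm.2)) :=
  stmt_10_general X₁ X₂ μ₁ hsupp₁ μ₂ hsupp₂ ν₁ hν₁ ν₂ hν₂
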